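/- arXiv:1811.10010 — 7 statements merged into one kernel-verified Lean document; each statement's English description precedes it below -/
import Mathlib

section
/- Let f : ℕ → ℕ be defined by f(1) = f(2) = f(3) = 1 and f(i) = f(i-1) + f(i-2) for i ≥ 4, and let j ≥ 3 be odd. Then the only vector x ∈ {0,1}^j satisfying ∑_{i=1}^{j} f(i)·x_i ≤ 1 + ∑_{i=1}^{(j-1)/2} f(2i+1) − f(j+1) is the zero vector; consequently, the minimum of 1 + ∑_{i=1}^{(j-1)/2} f(2i+1) − ∑_{i=1}^{j} f(i)·x_i over all such feasible x equals f(j+1). -/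
/-!
With the Fibonacci-like recursion, `1 + f 3 + f 5 + ⋯ + f (2m+1)` telescopes to `f (2m+2)`
(the familiar odd-index sum of Fibonacci numbers), so for `j = 2m+1` the right-hand side of the
knapsack constraint is `0`. Since every `f i` with `i ≥ 1` is positive, the only feasible vector
is `0`, whose objective value is `1 + ∑ f (2i+1) = f (j+1)`.
-/

open Finset

section FibonacciLike

variable {f : ℕ → ℕ} (hrec : ∀ i, 4 ≤ i → f i = f (i - 1) + f (i - 2))
include hrec

theorem pos_of_fibonacci_like (hf1 : f 1 = 1) (hf2 : f 2 = 1) (hf3 : f 3 = 1) :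
    ∀ i, 1 ≤ i → 0 < f i
  | 1, _ | 2, _ | 3, _ => by omega
  | n + 4, _ => by
    rw [hrec (n + 4) (by omega)]
    exact Nat.add_pos_left (pos_of_fibonacci_like hf1 hf2 hf3 (n + 3) (by omega)) _

theorem one_add_sum_odd_eq_of_fibonacci_like (hf2 : f 2 = 1) (m : ℕ) :
    1 + ∑ i ∈ Icc 1 m, f (2 * i + 1) = f (2 * m + 2) := by
  induction m with
  | zero => simp [hf2]
  | succ n ih =>
    rw [sum_Icc_succ_top (by omega), ← add_assoc, ih, hrec (2 * (n + 1) + 2) (by omega)]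
    rw [show 2 * (n + 1) + 2 - 1 = 2 * (n + 1) + 1 by omega,
      show 2 * (n + 1) + 2 - 2 = 2 * n + 2 by omega]
    ring

end FibonacciLike

theorem eq_zero_of_sum_mul_nonpos {ι : Type*} {s : Finset ι} {w x : ι → ℕ}
    (hw : ∀ i ∈ s, 0 < w i) (hsum : ∑ i ∈ s, (w i : ℤ) * (x i : ℤ) ≤ 0) :
    ∀ i ∈ s, x i = 0 := by
  have hterm : ∀ i ∈ s, (w i : ℤ) * (x i : ℤ) = 0 :=
    (sum_eq_zero_iff_of_nonneg fun i _ => by positivity).mp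
      (le_antisymm hsum (sum_nonneg fun i _ => by positivity))
  intro i hi
  exact_mod_cast (mul_eq_zero.mp (hterm i hi)).resolve_left (Int.natCast_pos.mpr (hw i hi)).ne'

theorem stmt_6_general (f : ℕ → ℕ) (hf1 : f 1 = 1) (hf2 : f 2 = 1) (hf3 : f 3 = 1)
    (hrec : ∀ i, 4 ≤ i → f i = f (i - 1) + f (i - 2))
    (j : ℕ) (hodd : Odd j) :
    (∀ x : ℕ → ℕ, (∀ i ∈ Finset.Icc 1 j, x i = 0 ∨ x i = 1) →
      (∑ i ∈ Finset.Icc 1 j, (f i : ℤ) * (x i : ℤ)) ≤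
        1 + (∑ i ∈ Finset.Icc 1 ((j - 1) / 2), (f (2 * i + 1) : ℤ)) - (f (j + 1) : ℤ) →
      ∀ i ∈ Finset.Icc 1 j, x i = 0) ∧
    IsLeast {g : ℤ | ∃ x : ℕ → ℕ, (∀ i ∈ Finset.Icc 1 j, x i = 0 ∨ x i = 1) ∧
      (∑ i ∈ Finset.Icc 1 j, (f i : ℤ) * (x i : ℤ)) ≤
        1 + (∑ i ∈ Finset.Icc 1 ((j - 1) / 2), (f (2 * i + 1) : ℤ)) - (f (j + 1) : ℤ) ∧
      g = 1 + (∑ i ∈ Finset.Icc 1 ((j - 1) / 2), (f (2 * i + 1) : ℤ)) -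
        ∑ i ∈ Finset.Icc 1 j, (f i : ℤ) * (x i : ℤ)}
      (f (j + 1) : ℤ) := by
  obtain ⟨m, rfl⟩ := hodd
  have hrhs :
      1 + (∑ i ∈ Icc 1 ((2 * m + 1 - 1) / 2), (f (2 * i + 1) : ℤ)) = f (2 * m + 1 + 1) := by
    rw [show (2 * m + 1 - 1) / 2 = m by omega, show 2 * m + 1 + 1 = 2 * m + 2 by omega,
      ← one_add_sum_odd_eq_of_fibonacci_like hrec hf2 m]
    push_cast
    rfl
  have hpos : ∀ i ∈ Icc 1 (2 * m + 1), 0 < f i := fun i hi =>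
    pos_of_fibonacci_like hrec hf1 hf2 hf3 i (mem_Icc.mp hi).1
  have hfeasible : ∀ x : ℕ → ℕ, ∑ i ∈ Icc 1 (2 * m + 1), (f i : ℤ) * (x i : ℤ) ≤ 0 →
      ∀ i ∈ Icc 1 (2 * m + 1), x i = 0 := fun x => eq_zero_of_sum_mul_nonpos hpos
  simp only [hrhs, sub_self]
  refine ⟨fun x _ => hfeasible x, ⟨fun _ => 0, fun _ _ => Or.inl rfl, by simp, by simp⟩, ?_⟩
  rintro g ⟨x, -, hle, rfl⟩
  rw [sum_eq_zero fun i hi => by rw [hfeasible x hle i hi]; simp, sub_zero]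

/-- Up-lifting problem in Gu's example: for odd `j ≥ 3`, the only binary vector `x` with
`∑_{i=1}^{j} f i · x i ≤ 1 + ∑_{i=1}^{(j-1)/2} f (2i+1) − f (j+1)` is the zero vector, and
the minimum of the lifting objective over feasible vectors equals `f (j+1)`. -/
theorem stmt_6 (f : ℕ → ℕ) (hf1 : f 1 = 1) (hf2 : f 2 = 1) (hf3 : f 3 = 1)
    (hrec : ∀ i, 4 ≤ i → f i = f (i - 1) + f (i - 2))
    (j : ℕ) (hj : 3 ≤ j) (hodd : Odd j) :
    (∀ x : ℕ → ℕ, (∀ i ∈ Finset.Icc 1 j, x i = 0 ∨ x i = 1) →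
      (∑ i ∈ Finset.Icc 1 j, (f i : ℤ) * (x i : ℤ)) ≤
        1 + (∑ i ∈ Finset.Icc 1 ((j - 1) / 2), (f (2 * i + 1) : ℤ)) - (f (j + 1) : ℤ) →
      ∀ i ∈ Finset.Icc 1 j, x i = 0) ∧
    IsLeast {g : ℤ | ∃ x : ℕ → ℕ, (∀ i ∈ Finset.Icc 1 j, x i = 0 ∨ x i = 1) ∧
      (∑ i ∈ Finset.Icc 1 j, (f i : ℤ) * (x i : ℤ)) ≤
        1 + (∑ i ∈ Finset.Icc 1 ((j - 1) / 2), (f (2 * i + 1) : ℤ)) - (f (j + 1) : ℤ) ∧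
      g = 1 + (∑ i ∈ Finset.Icc 1 ((j - 1) / 2), (f (2 * i + 1) : ℤ)) -
        ∑ i ∈ Finset.Icc 1 j, (f i : ℤ) * (x i : ℤ)}
      (f (j + 1) : ℤ) :=
  stmt_6_general f hf1 hf2 hf3 hrec j hodd
end

section
/- Let f : ℕ → ℕ be defined by f(1) = f(2) = f(3) = 1 and f(i) = f(i-1) + f(i-2) for i ≥ 4, and let j ≥ 4 be even. Then the maximum of ∑_{i=1}^{j} f(i)·x_i − 1 − ∑_{i=1}^{j/2−1} f(2i+1) over all vectors x ∈ {0,1}^j satisfying ∑_{i=1}^{j} f(i)·x_i ≤ 1 + ∑_{i=1}^{j/2−1} f(2i+1) + f(j+1) equals f(j+1), and it is attained at the all-ones vector. -/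
/-! Pairing consecutive terms, `f (2i-1) + f (2i) = f (2i+1)` for `i ≥ 2`, collapses the sum of
the first `j` terms of the sequence onto its odd-indexed terms, which gives
`∑_{i=1}^{j} f i = 1 + ∑_{i=1}^{j/2-1} f (2i+1) + f (j+1)`. So the all-ones vector meets the
knapsack constraint with equality, and the constraint itself bounds the objective by `f (j+1)`. -/

open Finset

theorem sum_Icc_two_mul_succ_eq {M : Type*} [AddCommMonoid M] (f : ℕ → M) (c : M)
    (hbase : f 1 + f 2 = c + f 3) (hrec : ∀ i, 4 ≤ i → f i = f (i - 1) + f (i - 2)) (k : ℕ) :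
    ∑ i ∈ Icc 1 (2 * (k + 1)), f i = c + ∑ i ∈ Icc 1 k, f (2 * i + 1) + f (2 * k + 3) := by
  induction k with
  | zero => simpa [sum_Icc_succ_top] using hbase
  | succ k ih =>
    have hnext : f (2 * k + 5) = f (2 * k + 4) + f (2 * k + 3) := hrec (2 * k + 5) (by omega)
    rw [show 2 * (k + 1 + 1) = 2 * (k + 1) + 1 + 1 by ring, sum_Icc_succ_top (by omega),
      sum_Icc_succ_top (by omega), ih, sum_Icc_succ_top (by omega)]
    simp only [show 2 * (k + 1) + 1 = 2 * k + 3 by ring, show 2 * k + 3 + 1 = 2 * k + 4 by ring,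
      show 2 * (k + 1) + 3 = 2 * k + 5 by ring, hnext]
    abel

/-- Down-lifting problem in Gu's example: for even `j ≥ 4`, the maximum of
`∑_{i=1}^{j} f i · x i − 1 − ∑_{i=1}^{j/2−1} f (2i+1)` over binary vectors `x` with
`∑_{i=1}^{j} f i · x i ≤ 1 + ∑_{i=1}^{j/2−1} f (2i+1) + f (j+1)` equals `f (j+1)`, and it is
attained at the all-ones vector. -/
theorem stmt_7 (f : ℕ → ℕ) (hf1 : f 1 = 1) (hf2 : f 2 = 1) (hf3 : f 3 = 1)
    (hrec : ∀ i, 4 ≤ i → f i = f (i - 1) + f (i - 2))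
    (j : ℕ) (hj : 4 ≤ j) (heven : Even j) :
    IsGreatest {g : ℤ | ∃ x : ℕ → ℕ, (∀ i ∈ Finset.Icc 1 j, x i = 0 ∨ x i = 1) ∧
      (∑ i ∈ Finset.Icc 1 j, (f i : ℤ) * (x i : ℤ)) ≤
        1 + (∑ i ∈ Finset.Icc 1 (j / 2 - 1), (f (2 * i + 1) : ℤ)) + (f (j + 1) : ℤ) ∧
      g = (∑ i ∈ Finset.Icc 1 j, (f i : ℤ) * (x i : ℤ)) - 1 -
        ∑ i ∈ Finset.Icc 1 (j / 2 - 1), (f (2 * i + 1) : ℤ)}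
      (f (j + 1) : ℤ) ∧
    ((∑ i ∈ Finset.Icc 1 j, (f i : ℤ)) ≤
        1 + (∑ i ∈ Finset.Icc 1 (j / 2 - 1), (f (2 * i + 1) : ℤ)) + (f (j + 1) : ℤ) ∧
      (∑ i ∈ Finset.Icc 1 j, (f i : ℤ)) - 1 -
        (∑ i ∈ Finset.Icc 1 (j / 2 - 1), (f (2 * i + 1) : ℤ)) = (f (j + 1) : ℤ)) := by
  obtain ⟨r, hr⟩ := heven
  obtain ⟨k, rfl⟩ : ∃ k, j = 2 * (k + 1) := ⟨r - 1, by omega⟩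
  rw [show 2 * (k + 1) / 2 - 1 = k by omega, show 2 * (k + 1) + 1 = 2 * k + 3 by ring]
  have hsum : ∑ i ∈ Icc 1 (2 * (k + 1)), (f i : ℤ)
      = 1 + ∑ i ∈ Icc 1 k, (f (2 * i + 1) : ℤ) + f (2 * k + 3) :=
    sum_Icc_two_mul_succ_eq (fun i => (f i : ℤ)) 1 (by simp [hf1, hf2, hf3])
      (fun i hi => by simp [hrec i hi]) k
  refine ⟨⟨⟨fun _ => 1, fun _ _ => Or.inr rfl, ?_, ?_⟩, ?_⟩, hsum.le, by linarith⟩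
  · simp only [Nat.cast_one, mul_one, hsum, le_refl]
  · simp only [Nat.cast_one, mul_one, hsum]
    ring
  · rintro g ⟨x, -, hle, rfl⟩
    linarith
end

section
/- Let f : ℕ → ℕ be defined by f(1) = f(2) = f(3) = 1 and f(i) = f(i-1) + f(i-2) for i ≥ 4. Let m ≥ 0 be an integer, r = m + 6, and λ = 2^{m+1} − 1. Then the minimum of ∑_{i=1}^{2r} f(i) − ∑_{i=1}^{2r+1} f(i)·x_i over all vectors x ∈ {0,1}^{2r+1} satisfying ∑_{i=1}^{2r+1} λ·f(i)·x_i ≤ λ·∑_{i=1}^{2r} f(i) − (λ(λ+3) + 1) equals λ + 4. -/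
/-!
Since `λ ≥ 1`, the constraint says `λ (S - A) > λ (λ + 3)` with `S = ∑_{i ≤ 2r} f i` and
`A = ∑ f i x i`, so the objective `S - A` is at least `λ + 4`. Conversely, the values
`f 1, …, f k` are complete in the sense of Brown (each is at most one more than the sum of its
predecessors), so every integer between `0` and `S` is a subset sum; taking the subset with sum
`S - (λ + 4)`, which is nonnegative because `S = f (2r + 2) ≥ 2 ^ r`, attains the bound.
-/

open Finset

theorem exists_subset_Icc_sum_eq_of_le_sum_add_one (a : ℕ → ℕ)
    (ha : ∀ k, a (k + 1) ≤ ∑ i ∈ Icc 1 k, a i + 1) (n : ℕ) :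
    ∀ N ≤ ∑ i ∈ Icc 1 n, a i, ∃ T ⊆ Icc 1 n, ∑ i ∈ T, a i = N := by
  induction n with
  | zero => exact fun N hN => ⟨∅, empty_subset _, by simp_all⟩
  | succ n ih =>
    intro N hN
    rw [sum_Icc_succ_top (by omega)] at hN
    have hmono : Icc 1 n ⊆ Icc 1 (n + 1) := Icc_subset_Icc_right (by omega)
    by_cases hsmall : N ≤ ∑ i ∈ Icc 1 n, a i
    · obtain ⟨T, hT, hsum⟩ := ih N hsmall
      exact ⟨T, hT.trans hmono, hsum⟩
    · obtain ⟨T, hT, hsum⟩ := ih (N - a (n + 1)) (by omega)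
      have hnT : n + 1 ∉ T := fun h => by simpa using hT h
      refine ⟨insert (n + 1) T, insert_subset (by simp) (hT.trans hmono), ?_⟩
      rw [sum_insert hnT, hsum]
      have := ha n
      omega

namespace FibLike

variable {f : ℕ → ℕ}

theorem add_two (hrec : ∀ i, 4 ≤ i → f i = f (i - 1) + f (i - 2)) {k : ℕ} (hk : 2 ≤ k) :
    f (k + 2) = f (k + 1) + f k :=
  hrec (k + 2) (by omega)

theorem le_succ (hf2 : f 2 = 1) (hf3 : f 3 = 1)
    (hrec : ∀ i, 4 ≤ i → f i = f (i - 1) + f (i - 2)) {k : ℕ} (hk : 2 ≤ k) :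
    f k ≤ f (k + 1) := by
  obtain rfl | hk := hk.eq_or_lt
  · simp [hf2, hf3]
  · rw [hrec (k + 1) (by omega), Nat.add_sub_cancel]
    omega

theorem sum_Icc_one (hf1 : f 1 = 1) (hf3 : f 3 = 1)
    (hrec : ∀ i, 4 ≤ i → f i = f (i - 1) + f (i - 2)) {k : ℕ} (hk : 1 ≤ k) :
    ∑ i ∈ Icc 1 k, f i = f (k + 2) := by
  induction k, hk using Nat.le_induction with
  | base => simp [hf1, hf3]
  | succ k hk ih => rw [sum_Icc_succ_top (by omega), ih, add_two hrec (k := k + 1) (by omega)]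

theorem two_pow_le (hf2 : f 2 = 1) (hf3 : f 3 = 1)
    (hrec : ∀ i, 4 ≤ i → f i = f (i - 1) + f (i - 2)) (n : ℕ) :
    2 ^ n ≤ f (2 * n + 2) := by
  induction n with
  | zero => simp [hf2]
  | succ n ih =>
    rw [show 2 * (n + 1) + 2 = 2 * n + 2 + 2 by ring, add_two hrec (by omega), pow_succ]
    have := le_succ hf2 hf3 hrec (k := 2 * n + 2) (by omega)
    omega

theorem two_pow_le_sum_Icc_one (hf1 : f 1 = 1) (hf2 : f 2 = 1) (hf3 : f 3 = 1)
    (hrec : ∀ i, 4 ≤ i → f i = f (i - 1) + f (i - 2)) {n : ℕ} (hn : 1 ≤ n) :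
    2 ^ n ≤ ∑ i ∈ Icc 1 (2 * n), f i := by
  rw [sum_Icc_one hf1 hf3 hrec (by omega)]
  exact two_pow_le hf2 hf3 hrec n

theorem exists_subset_sum_eq (hf1 : f 1 = 1) (hf2 : f 2 = 1) (hf3 : f 3 = 1)
    (hrec : ∀ i, 4 ≤ i → f i = f (i - 1) + f (i - 2)) (k : ℕ) :
    ∀ N ≤ ∑ i ∈ Icc 1 k, f i, ∃ T ⊆ Icc 1 k, ∑ i ∈ T, f i = N := by
  refine exists_subset_Icc_sum_eq_of_le_sum_add_one f (fun j => ?_) k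
  rcases Nat.eq_zero_or_pos j with rfl | hj
  · simp [hf1]
  · rw [sum_Icc_one hf1 hf3 hrec hj]
    have : f (j + 1) ≤ f (j + 2) := le_succ hf2 hf3 hrec (by omega)
    omega

end FibLike

theorem add_four_le_sub_of_mul_le {lam S A : ℤ} (hlam : 0 ≤ lam)
    (h : lam * A ≤ lam * S - (lam * (lam + 3) + 1)) : lam + 4 ≤ S - A := by
  have : lam * (lam + 3) < lam * (S - A) := by linarith
  linarith [lt_of_mul_lt_mul_left this hlam]

theorem exists_zero_one_sum_mul_eq_sum_of_subset {ι R : Type*} [DecidableEq ι] [Semiring R]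
    {s T : Finset ι} (hT : T ⊆ s) (a : ι → R) :
    ∃ x : ι → ℕ, (∀ i ∈ s, x i = 0 ∨ x i = 1) ∧ ∑ i ∈ s, a i * (x i : R) = ∑ i ∈ T, a i := by
  refine ⟨fun i => if i ∈ T then 1 else 0, fun i _ => by dsimp only; split_ifs <;> simp, ?_⟩
  simp only [Nat.cast_ite, Nat.cast_one, Nat.cast_zero, mul_ite, mul_one, mul_zero,
    sum_ite_mem, inter_eq_right.mpr hT]

/-- Lifting of `x_{2r+2}` in the NP-hardness construction: the minimum of
`∑_{i=1}^{2r} f i − ∑_{i=1}^{2r+1} f i · x i` over binary `x` with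
`∑_{i=1}^{2r+1} λ f i x i ≤ λ ∑_{i=1}^{2r} f i − (λ(λ+3)+1)` equals `λ + 4`. -/
theorem stmt_9 (f : ℕ → ℕ) (hf1 : f 1 = 1) (hf2 : f 2 = 1) (hf3 : f 3 = 1)
    (hrec : ∀ i, 4 ≤ i → f i = f (i - 1) + f (i - 2))
    (m r : ℕ) (hr : r = m + 6) (lam : ℤ) (hlam : lam = 2 ^ (m + 1) - 1) :
    IsLeast {g : ℤ | ∃ x : ℕ → ℕ, (∀ i ∈ Finset.Icc 1 (2 * r + 1), x i = 0 ∨ x i = 1) ∧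
      (∑ i ∈ Finset.Icc 1 (2 * r + 1), lam * (f i : ℤ) * (x i : ℤ)) ≤
        lam * (∑ i ∈ Finset.Icc 1 (2 * r), (f i : ℤ)) - (lam * (lam + 3) + 1) ∧
      g = (∑ i ∈ Finset.Icc 1 (2 * r), (f i : ℤ)) -
        ∑ i ∈ Finset.Icc 1 (2 * r + 1), (f i : ℤ) * (x i : ℤ)}
      (lam + 4) := by
  have hlam1 : 1 ≤ lam := by
    have : (1 : ℤ) ≤ 2 ^ m := one_le_pow₀ (by norm_num)
    rw [hlam, pow_succ]; omega
  have hS : 2 ^ (m + 1) + 3 ≤ ∑ i ∈ Icc 1 (2 * r), f i := by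
    have := FibLike.two_pow_le_sum_Icc_one hf1 hf2 hf3 hrec (n := r) (by omega)
    have : 2 ^ r = 2 ^ (m + 1) * 32 := by rw [hr]; ring
    have : 1 ≤ 2 ^ (m + 1) := Nat.one_le_two_pow
    omega
  simp_rw [mul_assoc lam, ← mul_sum]
  constructor
  · obtain ⟨T, hT, hTsum⟩ := FibLike.exists_subset_sum_eq hf1 hf2 hf3 hrec (2 * r)
      (∑ i ∈ Icc 1 (2 * r), f i - (2 ^ (m + 1) + 3)) (Nat.sub_le _ _)
    obtain ⟨x, hx01, hx⟩ := exists_zero_one_sum_mul_eq_sum_of_subset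
      (hT.trans (Icc_subset_Icc_right (Nat.le_succ _))) (fun i => (f i : ℤ))
    have hA : ∑ i ∈ Icc 1 (2 * r + 1), (f i : ℤ) * (x i : ℤ) =
        ∑ i ∈ Icc 1 (2 * r), (f i : ℤ) - (lam + 4) := by
      rw [hx, ← Nat.cast_sum, hTsum, Nat.cast_sub hS, hlam]
      push_cast
      ring
    exact ⟨x, hx01, by rw [hA]; nlinarith, by rw [hA]; ring⟩
  · rintro g ⟨x, -, hcon, rfl⟩
    exact add_four_le_sub_of_mul_le (by omega) hcon
end

section
/- Let f : ℕ → ℕ be defined by f(1) = f(2) = f(3) = 1 and f(i) = f(i-1) + f(i-2) for i ≥ 4. Let m ≥ 0 be an integer, r = m + 6, and λ = 2^{m+1} − 1. Then the minimum of ∑_{i=1}^{2r} f(i) − ∑_{i=1}^{2r+1} f(i)·x_i − (λ+4)·x_{2r+2} over all vectors x ∈ {0,1}^{2r+2} satisfying ∑_{i=1}^{2r+1} λ·f(i)·x_i + (λ(λ+3) + 1)·x_{2r+2} ≤ λ·∑_{i=1}^{2r} f(i) − (λ(λ+3) − 1) equals λ + 2, and it is attained at a point with x_{2r+2} = 1 and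 ∑_{i=1}^{2r+1} f(i)·x_i = ∑_{i=1}^{2r} f(i) − 2λ − 6. -/
/-!
Write `S = ∑_{i ≤ 2r} f i` and `T = ∑_{i ≤ 2r+1} f i x_i`. Dividing the constraint by `λ ≥ 1`
gives `S - T ≥ λ + 2` when `x_{2r+2} = 0` and `S - T ≥ 2λ + 6` when `x_{2r+2} = 1`, so the
objective `S - T - (λ + 4) x_{2r+2}` is at least `λ + 2`, with equality for `x_{2r+2} = 1` and
`T = S - 2λ - 6`. Such a `T` is reachable: `f (n + 2) = fib (n + 1)` gives
`S = fib (2r + 1) ≥ 2^{m+2} + 4 = 2λ + 6`, and since every `f (k + 1)` is at most one more than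
the sum of its predecessors, every number up to `∑_{i ≤ 2r+1} f i` is a subset sum of
`f 1, …, f (2r + 1)`.
-/

open Finset Nat

theorem exists_subset_Icc_sum_eq {a : ℕ → ℕ} (ha : ∀ k, a (k + 1) ≤ ∑ i ∈ Icc 1 k, a i + 1)
    (k : ℕ) {N : ℕ} (hN : N ≤ ∑ i ∈ Icc 1 k, a i) : ∃ s ⊆ Icc 1 k, ∑ i ∈ s, a i = N := by
  induction k generalizing N with
  | zero => exact ⟨∅, empty_subset _, by simpa using (Nat.le_zero.mp hN).symm⟩
  | succ k ih =>
    rw [sum_Icc_succ_top (by omega)] at hN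
    have hmono : Icc 1 k ⊆ Icc 1 (k + 1) := Icc_subset_Icc_right (by omega)
    by_cases hlow : N ≤ ∑ i ∈ Icc 1 k, a i
    · obtain ⟨s, hs, hsum⟩ := ih hlow
      exact ⟨s, hs.trans hmono, hsum⟩
    · obtain ⟨s, hs, hsum⟩ := ih (N := N - a (k + 1)) (by omega)
      have hks : k + 1 ∉ s := fun h => by simpa using hs h
      refine ⟨insert (k + 1) s, insert_subset (by simp) (hs.trans hmono), ?_⟩
      have := ha k
      rw [sum_insert hks, hsum]
      omega

theorem exists_binary_sum_eq {a : ℕ → ℕ} (ha : ∀ k, a (k + 1) ≤ ∑ i ∈ Icc 1 k, a i + 1)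
    (n : ℕ) (N : ℤ) (hN0 : 0 ≤ N) (hN : N ≤ ∑ i ∈ Icc 1 n, (a i : ℤ)) :
    ∃ x : ℕ → ℕ, (∀ i ∈ Icc 1 (n + 1), x i = 0 ∨ x i = 1) ∧ x (n + 1) = 1 ∧
      ∑ i ∈ Icc 1 n, (a i : ℤ) * (x i : ℤ) = N := by
  lift N to ℕ using hN0
  obtain ⟨s, hs, hsum⟩ := exists_subset_Icc_sum_eq ha n (N := N) (by exact_mod_cast hN)
  classical
  refine ⟨fun i => if i ∈ insert (n + 1) s then 1 else 0,
    fun i _ => by dsimp only; split_ifs <;> simp, by simp, ?_⟩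
  have hinter : Icc 1 n ∩ insert (n + 1) s = s := by
    rw [inter_insert_of_notMem (by simp), inter_eq_right.mpr hs]
  simp only [Nat.cast_ite, Nat.cast_one, Nat.cast_zero, mul_boole, sum_ite_mem, hinter]
  exact_mod_cast hsum

theorem two_pow_mul_fib_le (n m : ℕ) : 2 ^ m * fib n ≤ fib (n + 2 * m) := by
  induction m with
  | zero => simp
  | succ m ih =>
    have hstep : 2 * fib (n + 2 * m) ≤ fib (n + 2 * (m + 1)) := by
      rw [show n + 2 * (m + 1) = n + 2 * m + 2 by ring, fib_add_two]
      linarith [fib_le_fib_succ (n := n + 2 * m)]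
    calc 2 ^ (m + 1) * fib n = 2 * (2 ^ m * fib n) := by ring
      _ ≤ 2 * fib (n + 2 * m) := by gcongr
      _ ≤ _ := hstep

theorem two_pow_add_four_le_fib (m : ℕ) : 2 ^ (m + 2) + 4 ≤ fib (2 * m + 13) := by
  have h := two_pow_mul_fib_le 13 m
  rw [show fib 13 = 233 by decide, show 13 + 2 * m = 2 * m + 13 by ring] at h
  have := Nat.one_le_two_pow (n := m)
  rw [pow_add]
  omega

section

variable {f : ℕ → ℕ}

theorem eq_fib_of_rec (hf2 : f 2 = 1) (hf3 : f 3 = 1)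
    (hrec : ∀ i, 4 ≤ i → f i = f (i - 1) + f (i - 2)) (n : ℕ) : f (n + 2) = fib (n + 1) := by
  induction n using Nat.twoStepInduction with
  | zero => simpa using hf2
  | one => simpa using hf3
  | more n ih₀ ih₁ =>
    rw [hrec (n + 2 + 2) (by omega), show n + 2 + 2 - 1 = n + 1 + 2 by omega,
      show n + 2 + 2 - 2 = n + 2 by omega, ih₀, ih₁, fib_add_two (n := n + 1), add_comm]

variable (hf1 : f 1 = 1) (hfib : ∀ n, f (n + 2) = fib (n + 1))
include hf1 hfib

theorem sum_Icc_eq_fib {k : ℕ} (hk : 1 ≤ k) : ∑ i ∈ Icc 1 k, f i = fib (k + 1) := by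
  induction k, hk using Nat.le_induction with
  | base => simpa using hf1
  | succ k hk ih =>
    obtain ⟨j, rfl⟩ : ∃ j, k = j + 1 := ⟨k - 1, by omega⟩
    rw [sum_Icc_succ_top (by omega), ih, hfib, fib_add_two (n := j + 1), add_comm]

theorem le_sum_Icc_add_one (k : ℕ) : f (k + 1) ≤ ∑ i ∈ Icc 1 k, f i + 1 := by
  cases k with
  | zero => simp [hf1]
  | succ j =>
    rw [sum_Icc_eq_fib hf1 hfib (by omega), hfib]
    exact (fib_le_fib_succ).trans (le_add_right le_rfl)

theorem two_pow_add_four_le_sum_Icc (m : ℕ) :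
    2 ^ (m + 2) + 4 ≤ ∑ i ∈ Icc 1 (2 * (m + 6)), f i := by
  rw [sum_Icc_eq_fib hf1 hfib (by omega)]
  exact two_pow_add_four_le_fib m

end

theorem le_sub_of_lifting_constraint {lam S T y : ℤ} (hlam : 1 ≤ lam) (hy : y = 0 ∨ y = 1)
    (h : lam * T + (lam * (lam + 3) + 1) * y ≤ lam * S - (lam * (lam + 3) - 1)) :
    lam + 2 ≤ S - T - (lam + 4) * y := by
  rcases hy with rfl | rfl
  · have : lam * (lam + 1) < lam * (S - T) := by nlinarith
    have := lt_of_mul_lt_mul_left this (by omega)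
    linarith
  · have : lam * (2 * lam + 5) < lam * (S - T) := by nlinarith
    have := lt_of_mul_lt_mul_left this (by omega)
    linarith

/-- Lifting of `x_{2r+3}` in the NP-hardness construction: the minimum of
`∑_{i=1}^{2r} f i − ∑_{i=1}^{2r+1} f i · x i − (λ+4) x_{2r+2}` over binary vectors
`x ∈ {0,1}^{2r+2}` with
`∑_{i=1}^{2r+1} λ f i x i + (λ(λ+3)+1) x_{2r+2} ≤ λ ∑_{i=1}^{2r} f i − (λ(λ+3)−1)`
equals `λ + 2`, attained at a point with `x_{2r+2} = 1` and
`∑_{i=1}^{2r+1} f i x i = ∑_{i=1}^{2r} f i − 2λ − 6`. -/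
theorem stmt_10 (f : ℕ → ℕ) (hf1 : f 1 = 1) (hf2 : f 2 = 1) (hf3 : f 3 = 1)
    (hrec : ∀ i, 4 ≤ i → f i = f (i - 1) + f (i - 2))
    (m r : ℕ) (hr : r = m + 6) (lam : ℤ) (hlam : lam = 2 ^ (m + 1) - 1) :
    IsLeast {g : ℤ | ∃ x : ℕ → ℕ, (∀ i ∈ Finset.Icc 1 (2 * r + 2), x i = 0 ∨ x i = 1) ∧
      (∑ i ∈ Finset.Icc 1 (2 * r + 1), lam * (f i : ℤ) * (x i : ℤ)) +
          (lam * (lam + 3) + 1) * (x (2 * r + 2) : ℤ) ≤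
        lam * (∑ i ∈ Finset.Icc 1 (2 * r), (f i : ℤ)) - (lam * (lam + 3) - 1) ∧
      g = (∑ i ∈ Finset.Icc 1 (2 * r), (f i : ℤ)) -
          (∑ i ∈ Finset.Icc 1 (2 * r + 1), (f i : ℤ) * (x i : ℤ)) -
          (lam + 4) * (x (2 * r + 2) : ℤ)}
      (lam + 2) ∧
    ∃ x : ℕ → ℕ, (∀ i ∈ Finset.Icc 1 (2 * r + 2), x i = 0 ∨ x i = 1) ∧
      (∑ i ∈ Finset.Icc 1 (2 * r + 1), lam * (f i : ℤ) * (x i : ℤ)) +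
          (lam * (lam + 3) + 1) * (x (2 * r + 2) : ℤ) ≤
        lam * (∑ i ∈ Finset.Icc 1 (2 * r), (f i : ℤ)) - (lam * (lam + 3) - 1) ∧
      (∑ i ∈ Finset.Icc 1 (2 * r), (f i : ℤ)) -
          (∑ i ∈ Finset.Icc 1 (2 * r + 1), (f i : ℤ) * (x i : ℤ)) -
          (lam + 4) * (x (2 * r + 2) : ℤ) = lam + 2 ∧
      x (2 * r + 2) = 1 ∧
      (∑ i ∈ Finset.Icc 1 (2 * r + 1), (f i : ℤ) * (x i : ℤ)) =
        (∑ i ∈ Finset.Icc 1 (2 * r), (f i : ℤ)) - 2 * lam - 6 := by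
  subst hr
  have hfib := eq_fib_of_rec hf2 hf3 hrec
  have hlam1 : 1 ≤ lam := by
    rw [hlam, pow_succ]
    linarith [one_le_pow₀ (n := m) (by norm_num : (1 : ℤ) ≤ 2)]
  set S : ℤ := ∑ i ∈ Icc 1 (2 * (m + 6)), (f i : ℤ)
  have hS_large : 2 * lam + 6 ≤ S := by
    have := two_pow_add_four_le_sum_Icc hf1 hfib m
    rw [← Nat.cast_le (α := ℤ)] at this
    push_cast at this
    linarith [pow_succ (2 : ℤ) (m + 1)]
  have hS_le : S ≤ ∑ i ∈ Icc 1 (2 * (m + 6) + 1), (f i : ℤ) :=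
    sum_le_sum_of_subset_of_nonneg (Icc_subset_Icc_right (by omega)) fun _ _ _ => by positivity
  obtain ⟨x, hx_bin, hx_top, hx_sum⟩ := exists_binary_sum_eq (le_sum_Icc_add_one hf1 hfib)
    (2 * (m + 6) + 1) (S - 2 * lam - 6) (by linarith) (by linarith)
  have hweighted (y : ℕ → ℕ) : ∑ i ∈ Icc 1 (2 * (m + 6) + 1), lam * (f i : ℤ) * (y i : ℤ) =
      lam * ∑ i ∈ Icc 1 (2 * (m + 6) + 1), (f i : ℤ) * (y i : ℤ) := by
    simp_rw [mul_assoc, ← mul_sum]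
  have hx_feasible : ∑ i ∈ Icc 1 (2 * (m + 6) + 1), lam * (f i : ℤ) * (x i : ℤ) +
      (lam * (lam + 3) + 1) * (x (2 * (m + 6) + 2) : ℤ) ≤ lam * S - (lam * (lam + 3) - 1) := by
    rw [hweighted, hx_sum, hx_top, Nat.cast_one]
    linarith
  have hx_value : S - ∑ i ∈ Icc 1 (2 * (m + 6) + 1), (f i : ℤ) * (x i : ℤ) -
      (lam + 4) * (x (2 * (m + 6) + 2) : ℤ) = lam + 2 := by
    rw [hx_sum, hx_top]
    ring
  refine ⟨⟨⟨x, hx_bin, hx_feasible, hx_value.symm⟩, ?_⟩, x, hx_bin, hx_feasible, hx_value, hx_top,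
    hx_sum⟩
  rintro g ⟨y, hy_bin, hy_feasible, rfl⟩
  rw [hweighted] at hy_feasible
  refine le_sub_of_lifting_constraint hlam1 ?_ hy_feasible
  rcases hy_bin (2 * (m + 6) + 2) (by simp) with h | h <;> simp [h]
end

section
/- Let f : ℕ → ℕ be defined by f(1) = f(2) = f(3) = 1 and f(i) = f(i-1) + f(i-2) for i ≥ 4. Let m ≥ 0 be an integer, r = m + 6, λ = 2^{m+1} − 1, and let ω_1, …, ω_s, ω_{s+1} (s ≥ 0) be integers with 1 ≤ ω_t ≤ λ − 1 for all t and ∑_{t=1}^{s+1} ω_t ≤ 2λ. Then the minimum of ∑_{i=1}^{2r} f(i) − ∑_{i=1}^{2r+1} f(i)·x_i − (λ+4)·u − (λ+2)·v − ∑_{t=1}^{s} ω_t·y_t over all x ∈ {0,1}^{2r+1}, u, v ∈ {0,1}, y ∈ {0,1}^s satisfying ∑_{i=1}^{2r+1} λ·f(i)·x_i + (λ(λ+3)+1)·u + (λ(λ+3)−1)·v + ∑_{t=1}^{s} ω_t·(λ+1)·y_t ≤ λ·∑_{i=1}^{2r} f(i) − ω_{s+1}·(λ+1) equals ω_{s+1}.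 -/
/-!
The sequence `f` is the Fibonacci sequence shifted by one, `f (n + 2) = fib (n + 1)`, and its
partial sums are `∑_{i ≤ n + 1} f i = fib (n + 2)`. So every term exceeds the sum of the
previous ones by at most one, which makes every integer in `[0, ∑_{i ≤ n} f i]` a subset sum.

Let `F = ∑_{i ≤ 2r} f i = fib (2r + 1) ≥ 2λ + 3`. The value `ω_{s+1}` is attained by `u = 1`,
`v = 0`, `y = 0` and `x` the indicator of a subset with `∑ f i x i = F - λ - 4 - ω_{s+1}`; this
point is feasible exactly because `ω_{s+1} ≤ λ - 1`. Conversely, `λ` times the objective `g`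
is at least the constraint's left side subtracted from `λF`, which rearranges to
`λ g ≥ (λ + 1) ω_{s+1} + ∑ ω_t y_t + (λ - 1)(v - u) > λ (ω_{s+1} - 1)`.
-/

open Finset

theorem exists_subset_sum_eq_of_le_sum {a : ℕ → ℕ}
    (ha : ∀ n, a (n + 1) ≤ ∑ i ∈ Icc 1 n, a i + 1)
    (n T : ℕ) (hT : T ≤ ∑ i ∈ Icc 1 n, a i) : ∃ S ⊆ Icc 1 n, ∑ i ∈ S, a i = T := by
  induction n generalizing T with
  | zero => exact ⟨∅, empty_subset _, by simp at hT; simp [hT]⟩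
  | succ n ih =>
    rw [sum_Icc_succ_top (by omega)] at hT
    have hsub : Icc 1 n ⊆ Icc 1 (n + 1) := Icc_subset_Icc_right (by omega)
    by_cases hlarge : a (n + 1) ≤ T
    · obtain ⟨S, hS, hsum⟩ := ih (T - a (n + 1)) (by omega)
      have hnS : n + 1 ∉ S := fun h => by simpa using hS h
      refine ⟨insert (n + 1) S, insert_subset (by simp) (hS.trans hsub), ?_⟩
      rw [sum_insert hnS, hsum]
      omega
    · obtain ⟨S, hS, hsum⟩ := ih T (by have := ha n; omega)
      exact ⟨S, hS.trans hsub, hsum⟩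

theorem pow_mul_fib_le_fib (k n : ℕ) : 2 ^ k * Nat.fib n ≤ Nat.fib (2 * k + n) := by
  induction k with
  | zero => simp
  | succ k ih =>
    have hstep : Nat.fib (2 * (k + 1) + n) = Nat.fib (2 * k + n) + Nat.fib (2 * k + n + 1) := by
      rw [show 2 * (k + 1) + n = 2 * k + n + 2 by ring, Nat.fib_add_two]
    have := Nat.fib_le_fib_succ (n := 2 * k + n)
    rw [pow_succ, hstep]
    linarith

theorem le_sub_of_knapsack_constraint {lam ω F B S u v : ℤ} (hlam : 1 ≤ lam) (hω : 1 ≤ ω)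
    (hS : 0 ≤ S) (hu : u ≤ 1) (hv : 0 ≤ v)
    (hcon : lam * B + (lam * (lam + 3) + 1) * u + (lam * (lam + 3) - 1) * v + (lam + 1) * S ≤
      lam * F - ω * (lam + 1)) :
    ω ≤ F - B - (lam + 4) * u - (lam + 2) * v - S := by
  nlinarith

section RecurrenceSequence

variable {f : ℕ → ℕ} (hf2 : f 2 = 1) (hf3 : f 3 = 1)
  (hrec : ∀ i, 4 ≤ i → f i = f (i - 1) + f (i - 2))
include hf2 hf3 hrec

theorem eq_fib_of_rec_s11 (n : ℕ) : f (n + 2) = Nat.fib (n + 1) := by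
  induction n using Nat.twoStepInduction with
  | zero => simpa using hf2
  | one => simpa using hf3
  | more n ih0 ih1 =>
    rw [hrec (n + 4) (by omega), show n + 4 - 1 = n + 1 + 2 by omega,
      show n + 4 - 2 = n + 2 by omega, ih0, ih1, Nat.fib_add_two (n := n + 1)]
    ring

theorem sum_Icc_eq_fib_of_rec (hf1 : f 1 = 1) (n : ℕ) :
    ∑ i ∈ Icc 1 (n + 1), f i = Nat.fib (n + 2) := by
  induction n with
  | zero => simpa using hf1
  | succ n ih =>
    rw [sum_Icc_succ_top (by omega), ih, eq_fib_of_rec_s11 hf2 hf3 hrec, Nat.fib_add_two (n := n + 1)]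
    ring

theorem succ_le_sum_Icc_add_one_of_rec (hf1 : f 1 = 1) (n : ℕ) :
    f (n + 1) ≤ ∑ i ∈ Icc 1 n, f i + 1 := by
  cases n with
  | zero => simp [hf1]
  | succ n =>
    rw [eq_fib_of_rec_s11 hf2 hf3 hrec, sum_Icc_eq_fib_of_rec hf2 hf3 hrec hf1]
    exact Nat.le_add_right_of_le Nat.fib_le_fib_succ

theorem exists_binary_sum_eq_of_rec (hf1 : f 1 = 1) (n : ℕ) {T : ℤ} (hT₀ : 0 ≤ T)
    (hT : T ≤ ∑ i ∈ Icc 1 n, (f i : ℤ)) :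
    ∃ x : ℕ → ℕ, (∀ i, x i = 0 ∨ x i = 1) ∧ ∑ i ∈ Icc 1 n, (f i : ℤ) * x i = T := by
  lift T to ℕ using hT₀
  obtain ⟨S, hS, hsum⟩ := exists_subset_sum_eq_of_le_sum
    (succ_le_sum_Icc_add_one_of_rec hf2 hf3 hrec hf1) n T (by exact_mod_cast hT)
  refine ⟨fun i => if i ∈ S then 1 else 0, fun i => by beta_reduce; split_ifs <;> simp, ?_⟩
  simp only [Nat.cast_ite, Nat.cast_one, Nat.cast_zero, mul_ite, mul_one, mul_zero]
  rw [sum_ite_mem, inter_eq_right.mpr hS, ← hsum, Nat.cast_sum]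

theorem two_pow_add_one_le_sum_Icc_of_rec (hf1 : f 1 = 1) (m : ℕ) :
    2 ^ (m + 2) + 1 ≤ ∑ i ∈ Icc 1 (2 * m + 12), f i := by
  rw [sum_Icc_eq_fib_of_rec hf2 hf3 hrec hf1 (2 * m + 11),
    show 2 * m + 11 + 2 = 2 * m + 13 by ring]
  have h233 : 2 ^ m * 233 ≤ Nat.fib (2 * m + 13) := by
    simpa [Nat.fib_add_two] using pow_mul_fib_le_fib m 13
  have hpow : 1 ≤ 2 ^ m := Nat.one_le_two_pow
  rw [pow_add]
  omega

end RecurrenceSequence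

theorem stmt_11_general (f : ℕ → ℕ) (hf1 : f 1 = 1) (hf2 : f 2 = 1) (hf3 : f 3 = 1)
    (hrec : ∀ i, 4 ≤ i → f i = f (i - 1) + f (i - 2))
    (m r : ℕ) (hr : r = m + 6) (lam : ℤ) (hlam : lam = 2 ^ (m + 1) - 1)
    (s : ℕ) (ω : ℕ → ℤ)
    (hω : ∀ t ∈ Finset.Icc 1 (s + 1), 1 ≤ ω t ∧ ω t ≤ lam - 1) :
    IsLeast {g : ℤ | ∃ x : ℕ → ℕ, ∃ u v : ℕ, ∃ y : ℕ → ℕ,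
      (∀ i ∈ Finset.Icc 1 (2 * r + 1), x i = 0 ∨ x i = 1) ∧
      (u = 0 ∨ u = 1) ∧ (v = 0 ∨ v = 1) ∧
      (∀ t ∈ Finset.Icc 1 s, y t = 0 ∨ y t = 1) ∧
      (∑ i ∈ Finset.Icc 1 (2 * r + 1), lam * (f i : ℤ) * (x i : ℤ)) +
          (lam * (lam + 3) + 1) * (u : ℤ) + (lam * (lam + 3) - 1) * (v : ℤ) +
          (∑ t ∈ Finset.Icc 1 s, ω t * (lam + 1) * (y t : ℤ)) ≤
        lam * (∑ i ∈ Finset.Icc 1 (2 * r), (f i : ℤ)) - ω (s + 1) * (lam + 1) ∧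
      g = (∑ i ∈ Finset.Icc 1 (2 * r), (f i : ℤ)) -
          (∑ i ∈ Finset.Icc 1 (2 * r + 1), (f i : ℤ) * (x i : ℤ)) -
          (lam + 4) * (u : ℤ) - (lam + 2) * (v : ℤ) -
          ∑ t ∈ Finset.Icc 1 s, ω t * (y t : ℤ)}
      (ω (s + 1)) := by
  have hω₁ := hω (s + 1) (by simp)
  have hlam₁ : 1 ≤ lam := by
    rw [hlam, pow_succ]
    linarith [one_le_pow₀ (M₀ := ℤ) (n := m) one_le_two]
  set F := ∑ i ∈ Icc 1 (2 * r), (f i : ℤ) with hF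
  have hFlarge : 2 * lam + 3 ≤ F := by
    have := two_pow_add_one_le_sum_Icc_of_rec hf2 hf3 hrec hf1 m
    rw [hF, hr, show 2 * (m + 6) = 2 * m + 12 by ring, hlam]
    zify at this
    linarith [pow_succ (2 : ℤ) (m + 1)]
  refine ⟨?_, ?_⟩
  · obtain ⟨x, hx, hxsum⟩ := exists_binary_sum_eq_of_rec hf2 hf3 hrec hf1 (2 * r + 1)
      (T := F - (lam + 4 + ω (s + 1))) (by linarith)
      (by rw [sum_Icc_succ_top (by omega)]; linarith [Int.natCast_nonneg (f (2 * r + 1))])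
    refine ⟨x, 1, 0, fun _ => 0, fun i _ => hx i, Or.inr rfl, Or.inl rfl,
      fun _ _ => Or.inl rfl, ?_, ?_⟩
    · simp only [mul_assoc, ← mul_sum, hxsum, Nat.cast_one, Nat.cast_zero, mul_zero,
        sum_const_zero]
      linarith
    · simp only [hxsum, Nat.cast_one, Nat.cast_zero, mul_zero, sum_const_zero]
      ring
  · rintro g ⟨x, u, v, y, -, hu, -, -, hcon, rfl⟩
    have hS : 0 ≤ ∑ t ∈ Icc 1 s, ω t * (y t : ℤ) := sum_nonneg fun t ht =>
      mul_nonneg (by linarith [(hω t (Icc_subset_Icc_right (by omega) ht)).1]) (by positivity)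
    simp only [mul_assoc, mul_left_comm (ω _) (lam + 1), ← mul_sum] at hcon
    exact le_sub_of_knapsack_constraint hlam₁ hω₁.1 hS
      (by rcases hu with rfl | rfl <;> simp) (by positivity) hcon

/-- Induction step for lifting the variables with weights `ω` in the NP-hardness construction:
with weights `ω 1, …, ω (s+1)` satisfying `1 ≤ ω t ≤ λ − 1` and `∑_{t=1}^{s+1} ω t ≤ 2λ`,
the minimum of
`∑_{i=1}^{2r} f i − ∑_{i=1}^{2r+1} f i x i − (λ+4)u − (λ+2)v − ∑_{t=1}^{s} ω t · y t`
subject to the corresponding knapsack constraint equals `ω (s+1)`. -/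
theorem stmt_11 (f : ℕ → ℕ) (hf1 : f 1 = 1) (hf2 : f 2 = 1) (hf3 : f 3 = 1)
    (hrec : ∀ i, 4 ≤ i → f i = f (i - 1) + f (i - 2))
    (m r : ℕ) (hr : r = m + 6) (lam : ℤ) (hlam : lam = 2 ^ (m + 1) - 1)
    (s : ℕ) (ω : ℕ → ℤ)
    (hω : ∀ t ∈ Finset.Icc 1 (s + 1), 1 ≤ ω t ∧ ω t ≤ lam - 1)
    (hωsum : (∑ t ∈ Finset.Icc 1 (s + 1), ω t) ≤ 2 * lam) :
    IsLeast {g : ℤ | ∃ x : ℕ → ℕ, ∃ u v : ℕ, ∃ y : ℕ → ℕ,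
      (∀ i ∈ Finset.Icc 1 (2 * r + 1), x i = 0 ∨ x i = 1) ∧
      (u = 0 ∨ u = 1) ∧ (v = 0 ∨ v = 1) ∧
      (∀ t ∈ Finset.Icc 1 s, y t = 0 ∨ y t = 1) ∧
      (∑ i ∈ Finset.Icc 1 (2 * r + 1), lam * (f i : ℤ) * (x i : ℤ)) +
          (lam * (lam + 3) + 1) * (u : ℤ) + (lam * (lam + 3) - 1) * (v : ℤ) +
          (∑ t ∈ Finset.Icc 1 s, ω t * (lam + 1) * (y t : ℤ)) ≤
        lam * (∑ i ∈ Finset.Icc 1 (2 * r), (f i : ℤ)) - ω (s + 1) * (lam + 1) ∧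
      g = (∑ i ∈ Finset.Icc 1 (2 * r), (f i : ℤ)) -
          (∑ i ∈ Finset.Icc 1 (2 * r + 1), (f i : ℤ) * (x i : ℤ)) -
          (lam + 4) * (u : ℤ) - (lam + 2) * (v : ℤ) -
          ∑ t ∈ Finset.Icc 1 s, ω t * (y t : ℤ)}
      (ω (s + 1)) :=
  stmt_11_general f hf1 hf2 hf3 hrec m r hr lam hlam s ω hω
end

section
/- Let f : ℕ → ℕ be defined by f(1) = f(2) = f(3) = 1 and f(i) = f(i-1) + f(i-2) for i ≥ 4. Let m ≥ 0 be an integer, r = m + 6, λ = 2^{m+1} − 1, and let ω_1, …, ω_k be integers with 1 ≤ ω_t ≤ λ − 1 for all t and ∑_{t=1}^{k} ω_t = 2λ. Let M be the maximum of ∑_{i=1}^{2r+1} f(i)·x_i + ∑_{t=1}^{k} ω_t·y_t + 2λ + 6 − ∑_{i=1}^{2r} f(i) over all x ∈ {0,1}^{2r+1}, y ∈ {0,1}^k satisfying ∑_{i=1}^{2r+1} λ·f(i)·x_i + ∑_{t=1}^{k} ω_t·(λ+1)·y_t ≤ λ·∑_{i=1}^{2r+1} f(i) + λ². Then M = f(2r+1)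 + 3λ + 5 if there exists a subset T ⊆ {1,…,k} with ∑_{t∈T} ω_t = λ or ∑_{t∈T} ω_t = λ − 1, and M = f(2r+1) + 3λ + 4 otherwise. -/
/-!
Write `A = ∑ f i x_i` and `B = ∑ ω_t y_t`. Since `∑_{i ≤ n} f i = f (n + 2) ≥ f (n + 1)`, the
sequence `f` is complete: `A` takes every integer value in `[0, F]`, where `F = f (2r + 3)`, while
`B` ranges over the subset sums of the weights. The constraint reads `λ A + (λ + 1) B ≤ λ F + λ²`;
together with `A ≤ F` it forces `A + B ≤ F + λ - 1`, with equality only if `B ∈ {λ - 1, λ}`, and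
these values are attained when they are subset sums (with `A = F - 1`, resp. `A = F`). Otherwise
`A + B = F + λ - 2` is attained by `B = 2λ` and `A = F - λ - 2`, which is nonnegative because
`F ≥ 2 ^ r` outgrows `λ`.
-/

open Finset

structure IsFibLike (f : ℕ → ℕ) : Prop where
  one : f 1 = 1
  two : f 2 = 1
  three : f 3 = 1
  recurrence : ∀ i, 4 ≤ i → f i = f (i - 1) + f (i - 2)

namespace IsFibLike

variable {f : ℕ → ℕ}

theorem add_two (hf : IsFibLike f) {n : ℕ} (hn : 2 ≤ n) : f (n + 2) = f (n + 1) + f n :=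
  hf.recurrence (n + 2) (by omega)

theorem le_succ (hf : IsFibLike f) (n : ℕ) : f (n + 1) ≤ f (n + 2) := by
  match n with
  | 0 => simp [hf.one, hf.two]
  | 1 => simp [hf.two, hf.three]
  | n + 2 => rw [hf.add_two (n := n + 2) (by omega)]; omega

theorem sum_Icc (hf : IsFibLike f) {n : ℕ} (hn : 1 ≤ n) : ∑ i ∈ Icc 1 n, f i = f (n + 2) := by
  induction n, hn using Nat.le_induction with
  | base => simp [hf.one, hf.three]
  | succ n hn ih => rw [sum_Icc_succ_top (by omega), ih, hf.add_two (n := n + 1) (by omega)]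

theorem le_sum_Icc_add_one (hf : IsFibLike f) (n : ℕ) : f (n + 1) ≤ ∑ i ∈ Icc 1 n, f i + 1 := by
  rcases Nat.eq_zero_or_pos n with rfl | hn
  · simp [hf.one]
  · rw [hf.sum_Icc hn]; exact (hf.le_succ n).trans (Nat.le_succ _)

theorem two_pow_le (hf : IsFibLike f) (j : ℕ) : 2 ^ j ≤ f (2 * j + 3) := by
  induction j with
  | zero => simp [hf.three]
  | succ j ih =>
    have : f (2 * j + 3) ≤ f (2 * j + 4) := hf.le_succ (2 * j + 2)
    rw [show 2 * (j + 1) + 3 = 2 * j + 3 + 2 by ring, hf.add_two (by omega), pow_succ]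
    change 2 ^ j * 2 ≤ f (2 * j + 4) + f (2 * j + 3)
    omega

end IsFibLike

theorem exists_subset_sum_eq_of_le_sum_add_one {a : ℕ → ℕ}
    (ha : ∀ n, a (n + 1) ≤ ∑ i ∈ Icc 1 n, a i + 1) (n : ℕ) {A : ℕ}
    (hA : A ≤ ∑ i ∈ Icc 1 n, a i) : ∃ s ⊆ Icc 1 n, ∑ i ∈ s, a i = A := by
  induction n generalizing A with
  | zero => exact ⟨∅, empty_subset _, by simp_all⟩
  | succ n ih =>
    rw [sum_Icc_succ_top (by omega)] at hA
    have hsub : Icc 1 n ⊆ Icc 1 (n + 1) := Icc_subset_Icc_right (by omega)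
    by_cases hbig : a (n + 1) ≤ A
    · obtain ⟨s, hs, hsum⟩ := ih (A := A - a (n + 1)) (by omega)
      refine ⟨insert (n + 1) s, insert_subset (by simp) (hs.trans hsub), ?_⟩
      rw [sum_insert fun h => by simpa using hs h, hsum]
      omega
    · obtain ⟨s, hs, hsum⟩ := ih (A := A) (by have := ha n; omega)
      exact ⟨s, hs.trans hsub, hsum⟩

section ZeroOne

variable {α R : Type*} [NonAssocSemiring R]

theorem sum_mul_ite_mem [DecidableEq α] {I s : Finset α} (hs : s ⊆ I) (v : α → R) :
    ∑ i ∈ I, v i * ((if i ∈ s then 1 else 0 : ℕ) : R) = ∑ i ∈ s, v i := by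
  simp only [Nat.cast_ite, Nat.cast_one, Nat.cast_zero, mul_ite, mul_one, mul_zero,
    sum_ite_mem, inter_eq_right.mpr hs]

theorem exists_subset_sum_eq_sum_mul {I : Finset α} {x : α → ℕ}
    (hx : ∀ i ∈ I, x i = 0 ∨ x i = 1) :
    ∃ s ⊆ I, ∀ v : α → R, ∑ i ∈ I, v i * (x i : R) = ∑ i ∈ s, v i := by
  refine ⟨I.filter (x · = 1), filter_subset _ _, fun v => ?_⟩
  rw [sum_filter]
  refine sum_congr rfl fun i hi => ?_
  rcases hx i hi with h | h <;> simp [h]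

end ZeroOne

theorem add_le_of_knapsack {lam A B F : ℤ} (hlam : 0 < lam) (hAF : A ≤ F)
    (h : lam * A + (lam + 1) * B ≤ lam * F + lam ^ 2) : A + B ≤ F + lam - 1 := by
  nlinarith

theorem eq_or_eq_of_knapsack {lam A B F : ℤ} (hlam : 0 < lam) (hAF : A ≤ F)
    (h : lam * A + (lam + 1) * B ≤ lam * F + lam ^ 2) (htight : F + lam - 1 ≤ A + B) :
    B = lam ∨ B = lam - 1 := by
  have : B ≤ lam := by nlinarith
  omega

def downLiftingValues (a : ℕ → ℕ) (n : ℕ) (w : ℕ → ℤ) (k : ℕ) (lam c : ℤ) : Set ℤ :=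
  {g | ∃ x : ℕ → ℕ, ∃ y : ℕ → ℕ,
    (∀ i ∈ Icc 1 n, x i = 0 ∨ x i = 1) ∧
    (∀ t ∈ Icc 1 k, y t = 0 ∨ y t = 1) ∧
    (∑ i ∈ Icc 1 n, lam * (a i : ℤ) * (x i : ℤ)) + (∑ t ∈ Icc 1 k, w t * (lam + 1) * (y t : ℤ)) ≤
      lam * (∑ i ∈ Icc 1 n, (a i : ℤ)) + lam ^ 2 ∧
    g = (∑ i ∈ Icc 1 n, (a i : ℤ) * (x i : ℤ)) + (∑ t ∈ Icc 1 k, w t * (y t : ℤ)) + c}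

section DownLifting

variable {a : ℕ → ℕ} {n k : ℕ} {w : ℕ → ℤ} {lam c g : ℤ}

theorem sum_le_sum_Icc_of_subset {s : Finset ℕ} (hs : s ⊆ Icc 1 n) :
    ∑ i ∈ s, (a i : ℤ) ≤ ∑ i ∈ Icc 1 n, (a i : ℤ) :=
  sum_le_sum_of_subset_of_nonneg hs fun _ _ _ => by positivity

theorem mem_downLiftingValues_iff :
    g ∈ downLiftingValues a n w k lam c ↔ ∃ s ⊆ Icc 1 n, ∃ T ⊆ Icc 1 k,
      lam * ∑ i ∈ s, (a i : ℤ) + (lam + 1) * ∑ t ∈ T, w t ≤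
        lam * ∑ i ∈ Icc 1 n, (a i : ℤ) + lam ^ 2 ∧
      g = ∑ i ∈ s, (a i : ℤ) + ∑ t ∈ T, w t + c := by
  have hA (s : Finset ℕ) : ∑ i ∈ s, lam * (a i : ℤ) = lam * ∑ i ∈ s, (a i : ℤ) :=
    (mul_sum ..).symm
  have hB (T : Finset ℕ) : ∑ t ∈ T, w t * (lam + 1) = (lam + 1) * ∑ t ∈ T, w t := by
    rw [← sum_mul, mul_comm]
  constructor
  · rintro ⟨x, y, hx, hy, hcon, rfl⟩
    obtain ⟨s, hs, hxs⟩ := exists_subset_sum_eq_sum_mul (R := ℤ) hx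
    obtain ⟨T, hT, hyT⟩ := exists_subset_sum_eq_sum_mul (R := ℤ) hy
    refine ⟨s, hs, T, hT, ?_, by rw [hxs, hyT]⟩
    rwa [hxs, hyT, hA, hB] at hcon
  · rintro ⟨s, hs, T, hT, hcon, rfl⟩
    refine ⟨fun i => if i ∈ s then 1 else 0, fun t => if t ∈ T then 1 else 0,
      fun i _ => (ite_eq_or_eq _ _ _).symm, fun t _ => (ite_eq_or_eq _ _ _).symm, ?_, ?_⟩
    · rwa [sum_mul_ite_mem hs, sum_mul_ite_mem hT, hA, hB]
    · rw [sum_mul_ite_mem hs, sum_mul_ite_mem hT]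

theorem le_of_mem_downLiftingValues (hlam : 0 < lam) (hg : g ∈ downLiftingValues a n w k lam c) :
    g ≤ ∑ i ∈ Icc 1 n, (a i : ℤ) + lam - 1 + c := by
  obtain ⟨s, hs, T, -, hcon, rfl⟩ := mem_downLiftingValues_iff.mp hg
  linarith [add_le_of_knapsack hlam (sum_le_sum_Icc_of_subset hs) hcon]

theorem exists_subset_sum_eq_of_mem_downLiftingValues (hlam : 0 < lam)
    (hg : g ∈ downLiftingValues a n w k lam c)
    (htight : ∑ i ∈ Icc 1 n, (a i : ℤ) + lam - 1 + c ≤ g) :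
    ∃ T ⊆ Icc 1 k, ∑ t ∈ T, w t = lam ∨ ∑ t ∈ T, w t = lam - 1 := by
  obtain ⟨s, hs, T, hT, hcon, rfl⟩ := mem_downLiftingValues_iff.mp hg
  exact ⟨T, hT, eq_or_eq_of_knapsack hlam (sum_le_sum_Icc_of_subset hs) hcon (by linarith)⟩

theorem mem_downLiftingValues_of_le
    (hcomplete : ∀ A ≤ ∑ i ∈ Icc 1 n, a i, ∃ s ⊆ Icc 1 n, ∑ i ∈ s, a i = A)
    {A : ℤ} (hA0 : 0 ≤ A) (hAF : A ≤ ∑ i ∈ Icc 1 n, (a i : ℤ)) {T : Finset ℕ} (hT : T ⊆ Icc 1 k)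
    (hcon : lam * A + (lam + 1) * ∑ t ∈ T, w t ≤ lam * ∑ i ∈ Icc 1 n, (a i : ℤ) + lam ^ 2)
    (hg : g = A + ∑ t ∈ T, w t + c) : g ∈ downLiftingValues a n w k lam c := by
  subst hg
  lift A to ℕ using hA0
  obtain ⟨s, hs, hsA⟩ := hcomplete A (by exact_mod_cast hAF)
  have hsA' : ∑ i ∈ s, (a i : ℤ) = A := by exact_mod_cast hsA
  exact mem_downLiftingValues_iff.mpr ⟨s, hs, T, hT, by rwa [hsA'], by rw [hsA']⟩

theorem isGreatest_downLiftingValues_of_exists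
    (hcomplete : ∀ A ≤ ∑ i ∈ Icc 1 n, a i, ∃ s ⊆ Icc 1 n, ∑ i ∈ s, a i = A)
    (hlam : 0 < lam) (hF : 1 ≤ ∑ i ∈ Icc 1 n, (a i : ℤ))
    (hex : ∃ T ⊆ Icc 1 k, ∑ t ∈ T, w t = lam ∨ ∑ t ∈ T, w t = lam - 1) :
    IsGreatest (downLiftingValues a n w k lam c) (∑ i ∈ Icc 1 n, (a i : ℤ) + lam - 1 + c) := by
  refine ⟨?_, fun g hg => le_of_mem_downLiftingValues hlam hg⟩
  obtain ⟨T, hT, hB | hB⟩ := hex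
  · exact mem_downLiftingValues_of_le hcomplete (A := ∑ i ∈ Icc 1 n, (a i : ℤ) - 1)
      (by linarith) (by linarith) hT (by rw [hB]; linarith) (by rw [hB]; ring)
  · exact mem_downLiftingValues_of_le hcomplete (by linarith) le_rfl hT
      (by rw [hB]; nlinarith) (by rw [hB]; ring)

theorem isGreatest_downLiftingValues_of_not_exists
    (hcomplete : ∀ A ≤ ∑ i ∈ Icc 1 n, a i, ∃ s ⊆ Icc 1 n, ∑ i ∈ s, a i = A)
    (hlam : 0 < lam) (hF : lam + 2 ≤ ∑ i ∈ Icc 1 n, (a i : ℤ))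
    (hw : ∑ t ∈ Icc 1 k, w t = 2 * lam)
    (hno : ¬ ∃ T ⊆ Icc 1 k, ∑ t ∈ T, w t = lam ∨ ∑ t ∈ T, w t = lam - 1) :
    IsGreatest (downLiftingValues a n w k lam c) (∑ i ∈ Icc 1 n, (a i : ℤ) + lam - 2 + c) := by
  refine ⟨?_, fun g hg => ?_⟩
  · exact mem_downLiftingValues_of_le hcomplete (A := ∑ i ∈ Icc 1 n, (a i : ℤ) - lam - 2)
      (by linarith) (by linarith) Subset.rfl (by rw [hw]; linarith) (by rw [hw]; ring)
  · by_contra hlt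
    exact hno (exists_subset_sum_eq_of_mem_downLiftingValues hlam hg (by linarith))

end DownLifting

theorem stmt_12_general (f : ℕ → ℕ) (hf1 : f 1 = 1) (hf2 : f 2 = 1) (hf3 : f 3 = 1)
    (hrec : ∀ i, 4 ≤ i → f i = f (i - 1) + f (i - 2))
    (m r : ℕ) (hr : r = m + 6) (lam : ℤ) (hlam : lam = 2 ^ (m + 1) - 1)
    (k : ℕ) (ω : ℕ → ℤ)
    (hωsum : (∑ t ∈ Finset.Icc 1 k, ω t) = 2 * lam)
    (M : ℤ)
    (hM : IsGreatest {g : ℤ | ∃ x : ℕ → ℕ, ∃ y : ℕ → ℕ,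
      (∀ i ∈ Finset.Icc 1 (2 * r + 1), x i = 0 ∨ x i = 1) ∧
      (∀ t ∈ Finset.Icc 1 k, y t = 0 ∨ y t = 1) ∧
      (∑ i ∈ Finset.Icc 1 (2 * r + 1), lam * (f i : ℤ) * (x i : ℤ)) +
          (∑ t ∈ Finset.Icc 1 k, ω t * (lam + 1) * (y t : ℤ)) ≤
        lam * (∑ i ∈ Finset.Icc 1 (2 * r + 1), (f i : ℤ)) + lam ^ 2 ∧
      g = (∑ i ∈ Finset.Icc 1 (2 * r + 1), (f i : ℤ) * (x i : ℤ)) +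
          (∑ t ∈ Finset.Icc 1 k, ω t * (y t : ℤ)) + 2 * lam + 6 -
          ∑ i ∈ Finset.Icc 1 (2 * r), (f i : ℤ)} M) :
    ((∃ T ⊆ Finset.Icc 1 k, (∑ t ∈ T, ω t) = lam ∨ (∑ t ∈ T, ω t) = lam - 1) →
      M = (f (2 * r + 1) : ℤ) + 3 * lam + 5) ∧
    (¬ (∃ T ⊆ Finset.Icc 1 k, (∑ t ∈ T, ω t) = lam ∨ (∑ t ∈ T, ω t) = lam - 1) →
      M = (f (2 * r + 1) : ℤ) + 3 * lam + 4) := by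
  have hf : IsFibLike f := ⟨hf1, hf2, hf3, hrec⟩
  have hcomplete (A : ℕ) (hA : A ≤ ∑ i ∈ Icc 1 (2 * r + 1), f i) :=
    exists_subset_sum_eq_of_le_sum_add_one hf.le_sum_Icc_add_one _ hA
  have hsum {n : ℕ} (hn : 1 ≤ n) : ∑ i ∈ Icc 1 n, (f i : ℤ) = f (n + 2) := by
    exact_mod_cast hf.sum_Icc hn
  have hF : ∑ i ∈ Icc 1 (2 * r + 1), (f i : ℤ) = f (2 * r + 2) + f (2 * r + 1) := by
    rw [hsum (by omega)]; exact_mod_cast hf.add_two (by omega)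
  have hpos : 0 < lam := by
    have : (1 : ℤ) < 2 ^ (m + 1) := one_lt_pow₀ one_lt_two (by omega)
    omega
  have hgrow : lam + 2 ≤ ∑ i ∈ Icc 1 (2 * r + 1), (f i : ℤ) := by
    have hfr : (2 : ℤ) ^ r ≤ f (2 * r + 1 + 2) := by exact_mod_cast hf.two_pow_le r
    have hpow : (2 : ℤ) ^ (m + 1) < 2 ^ r := pow_lt_pow_right₀ one_lt_two (by omega)
    rw [hsum (by omega)]
    omega
  have hM' : IsGreatest (downLiftingValues f (2 * r + 1) ω k lam
      (2 * lam + 6 - ∑ i ∈ Icc 1 (2 * r), (f i : ℤ))) M := by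
    simpa only [downLiftingValues, add_sub_assoc, add_assoc] using hM
  rw [hsum (n := 2 * r) (by omega)] at hM'
  constructor
  · intro hex
    rw [hM'.unique (isGreatest_downLiftingValues_of_exists hcomplete hpos (by linarith) hex), hF]
    ring
  · intro hno
    rw [hM'.unique (isGreatest_downLiftingValues_of_not_exists hcomplete hpos hgrow hωsum hno), hF]
    ring

/-- Reduced down-lifting problem for the final variable in the NP-hardness construction:
its maximum value `M` equals `f (2r+1) + 3λ + 5` if some subset of the weights sums to `λ`
or `λ − 1`, and equals `f (2r+1) + 3λ + 4` otherwise. -/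
theorem stmt_12 (f : ℕ → ℕ) (hf1 : f 1 = 1) (hf2 : f 2 = 1) (hf3 : f 3 = 1)
    (hrec : ∀ i, 4 ≤ i → f i = f (i - 1) + f (i - 2))
    (m r : ℕ) (hr : r = m + 6) (lam : ℤ) (hlam : lam = 2 ^ (m + 1) - 1)
    (k : ℕ) (ω : ℕ → ℤ)
    (hω : ∀ t ∈ Finset.Icc 1 k, 1 ≤ ω t ∧ ω t ≤ lam - 1)
    (hωsum : (∑ t ∈ Finset.Icc 1 k, ω t) = 2 * lam)
    (M : ℤ)
    (hM : IsGreatest {g : ℤ | ∃ x : ℕ → ℕ, ∃ y : ℕ → ℕ,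
      (∀ i ∈ Finset.Icc 1 (2 * r + 1), x i = 0 ∨ x i = 1) ∧
      (∀ t ∈ Finset.Icc 1 k, y t = 0 ∨ y t = 1) ∧
      (∑ i ∈ Finset.Icc 1 (2 * r + 1), lam * (f i : ℤ) * (x i : ℤ)) +
          (∑ t ∈ Finset.Icc 1 k, ω t * (lam + 1) * (y t : ℤ)) ≤
        lam * (∑ i ∈ Finset.Icc 1 (2 * r + 1), (f i : ℤ)) + lam ^ 2 ∧
      g = (∑ i ∈ Finset.Icc 1 (2 * r + 1), (f i : ℤ) * (x i : ℤ)) +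
          (∑ t ∈ Finset.Icc 1 k, ω t * (y t : ℤ)) + 2 * lam + 6 -
          ∑ i ∈ Finset.Icc 1 (2 * r), (f i : ℤ)} M) :
    ((∃ T ⊆ Finset.Icc 1 k, (∑ t ∈ T, ω t) = lam ∨ (∑ t ∈ T, ω t) = lam - 1) →
      M = (f (2 * r + 1) : ℤ) + 3 * lam + 5) ∧
    (¬ (∃ T ⊆ Finset.Icc 1 k, (∑ t ∈ T, ω t) = lam ∨ (∑ t ∈ T, ω t) = lam - 1) →
      M = (f (2 * r + 1) : ℤ) + 3 * lam + 4) :=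
  stmt_12_general f hf1 hf2 hf3 hrec m r hr lam hlam k ω hωsum M hM
end

section
/- Let f : ℕ → ℕ be defined by f(1) = f(2) = f(3) = 1 and f(i) = f(i-1) + f(i-2) for i ≥ 4. Let m ≥ 0 be an integer, r = m + 6, λ = 2^{m+1} − 1, and let ω_1, …, ω_k be integers with 1 ≤ ω_t ≤ λ − 1 for all t and ∑_{t=1}^{k} ω_t = 2λ. For every x ∈ {0,1}^{2r+1}, u, v ∈ {0,1}, y ∈ {0,1}^k with u = 0 or v = 0, the value g = ∑_{i=1}^{2r+1} f(i)·x_i + (λ+4)·u + (λ+2)·v + ∑_{t=1}^{k} ω_t·y_t − ∑_{i=1}^{2r} f(i) satisfies g ≤ f(2r+1) + 3λ + 4. -/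
/-! Replacing every binary variable by 1 only increases the objective, since all weights are
nonnegative; then the `f`-sums cancel down to `f (2r+1)`, the `ω`-sum contributes `2λ`, and
`u = 0 ∨ v = 0` caps the `u, v` part at `λ + 4`. -/

open Finset

lemma sum_mul_le_sum_of_zero_or_one {ι R : Type*} [Semiring R] [PartialOrder R]
    [IsOrderedRing R] (s : Finset ι) (a : ι → R) (b : ι → ℕ)
    (ha : ∀ i ∈ s, 0 ≤ a i) (hb : ∀ i ∈ s, b i = 0 ∨ b i = 1) :
    ∑ i ∈ s, a i * (b i : R) ≤ ∑ i ∈ s, a i := by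
  refine sum_le_sum fun i hi => ?_
  rcases hb i hi with h | h <;> simp [h, ha i hi]

lemma mul_add_mul_le_of_zero_or_one {a b : ℤ} {u v : ℕ} (hb : b ≤ a) (ha : 0 ≤ a)
    (hu : u = 0 ∨ u = 1) (hv : v = 0 ∨ v = 1) (huv : u = 0 ∨ v = 0) :
    a * (u : ℤ) + b * (v : ℤ) ≤ a := by
  rcases hu with rfl | rfl <;> rcases hv with rfl | rfl <;> simp_all

theorem stmt_13_general (f : ℕ → ℕ)
    (m r : ℕ) (lam : ℤ) (hlam : lam = 2 ^ (m + 1) - 1)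
    (k : ℕ) (ω : ℕ → ℤ)
    (hω : ∀ t ∈ Finset.Icc 1 k, 1 ≤ ω t ∧ ω t ≤ lam - 1)
    (hωsum : (∑ t ∈ Finset.Icc 1 k, ω t) = 2 * lam) :
    ∀ (x : ℕ → ℕ) (u v : ℕ) (y : ℕ → ℕ),
      (∀ i ∈ Finset.Icc 1 (2 * r + 1), x i = 0 ∨ x i = 1) →
      (u = 0 ∨ u = 1) → (v = 0 ∨ v = 1) →
      (∀ t ∈ Finset.Icc 1 k, y t = 0 ∨ y t = 1) →
      (u = 0 ∨ v = 0) →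
      (∑ i ∈ Finset.Icc 1 (2 * r + 1), (f i : ℤ) * (x i : ℤ)) +
          (lam + 4) * (u : ℤ) + (lam + 2) * (v : ℤ) +
          (∑ t ∈ Finset.Icc 1 k, ω t * (y t : ℤ)) -
          (∑ i ∈ Finset.Icc 1 (2 * r), (f i : ℤ)) ≤
        (f (2 * r + 1) : ℤ) + 3 * lam + 4 := by
  intro x u v y hx hu hv hy huv
  have hlam_nonneg : 0 ≤ lam := by
    have := pow_pos (two_pos : (0 : ℤ) < 2) (m + 1)
    omega
  have hfx := sum_mul_le_sum_of_zero_or_one _ (fun i => (f i : ℤ)) x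
    (fun i _ => Int.natCast_nonneg _) hx
  have hωy := sum_mul_le_sum_of_zero_or_one _ ω y (fun t ht => by linarith [(hω t ht).1]) hy
  have huv := mul_add_mul_le_of_zero_or_one (a := lam + 4) (b := lam + 2) (by omega)
    (by omega) hu hv huv
  have hsplit := sum_Icc_succ_top (by omega : 1 ≤ 2 * r + 1) (fun i => (f i : ℤ))
  linarith

/-- In the down-lifting problem for the final variable of the NP-hardness construction,
any binary point with `u = 0` or `v = 0` has objective value at most `f (2r+1) + 3λ + 4`. -/
theorem stmt_13 (f : ℕ → ℕ) (hf1 : f 1 = 1) (hf2 : f 2 = 1) (hf3 : f 3 = 1)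
    (hrec : ∀ i, 4 ≤ i → f i = f (i - 1) + f (i - 2))
    (m r : ℕ) (hr : r = m + 6) (lam : ℤ) (hlam : lam = 2 ^ (m + 1) - 1)
    (k : ℕ) (ω : ℕ → ℤ)
    (hω : ∀ t ∈ Finset.Icc 1 k, 1 ≤ ω t ∧ ω t ≤ lam - 1)
    (hωsum : (∑ t ∈ Finset.Icc 1 k, ω t) = 2 * lam) :
    ∀ (x : ℕ → ℕ) (u v : ℕ) (y : ℕ → ℕ),
      (∀ i ∈ Finset.Icc 1 (2 * r + 1), x i = 0 ∨ x i = 1) →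
      (u = 0 ∨ u = 1) → (v = 0 ∨ v = 1) →
      (∀ t ∈ Finset.Icc 1 k, y t = 0 ∨ y t = 1) →
      (u = 0 ∨ v = 0) →
      (∑ i ∈ Finset.Icc 1 (2 * r + 1), (f i : ℤ) * (x i : ℤ)) +
          (lam + 4) * (u : ℤ) + (lam + 2) * (v : ℤ) +
          (∑ t ∈ Finset.Icc 1 k, ω t * (y t : ℤ)) -
          (∑ i ∈ Finset.Icc 1 (2 * r), (f i : ℤ)) ≤
        (f (2 * r + 1) : ℤ) + 3 * lam + 4 :=
  stmt_13_general f m r lam hlam k ω hω hωsum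
end
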